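/- Strong duality for the bundle entropy subproblem: for any G ∈ ℝ^{k×n} and h ∈ ℝ^k, min_{y ∈ [0,1]^n} ( max_{1 ≤ i ≤ k} (Gy + h)_i − H(y) ) = max_{λ ≥ 0, 1ᵀλ = 1} ( (G1 + h)ᵀλ − ∑_{j=1}^n log(1 + exp((Gᵀλ)_j)) ), and both the minimum and the maximum are attained. -/

import Mathlib

/-!
Lagrangian duality with multipliers `λ` on the simplex. For fixed `a`, the function
`y ↦ a y - H(y)` on `[0, 1]` is minimised at `y = σ(-a)` (`σ` the logistic sigmoid) with
value `a - log (1 + exp a)` (Gibbs' inequality), so minimising the Lagrangian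
`λᵀ(Gy + h) - H(y)` over the cube gives the dual function; since `λᵀv ≤ maxᵢ vᵢ` this is weak
duality. The dual function is continuous, so it attains its maximum on the compact simplex at
some `λ*`, and its gradient there is `Gy* + h` with `y* = σ(-Gᵀλ*)`. First-order optimality in
the directions `eᵢ - λ*` gives `(Gy* + h)ᵢ ≤ λ*ᵀ(Gy* + h)` for all `i`, so at `y*` the maximum
coincides with the `λ*`-average and the primal value equals the dual value.
-/

/-- The negative binary entropy `-H(y) = ∑ᵢ (yᵢ log yᵢ + (1 - yᵢ) log (1 - yᵢ))`.
Note that `Real.log 0 = 0` in Mathlib, so this automatically uses the convention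
`0 · log 0 = 0`. -/
noncomputable def negEnt {n : ℕ} (y : Fin n → ℝ) : ℝ :=
  ∑ i, (y i * Real.log (y i) + (1 - y i) * Real.log (1 - y i))

open Real Matrix Finset

lemma negEnt_eq_neg_sum_binEntropy {n : ℕ} (y : Fin n → ℝ) :
    negEnt y = -∑ i, binEntropy (y i) := by
  simp only [negEnt, binEntropy, log_inv, ← sum_neg_distrib]
  congr 1 with i
  ring

lemma sub_le_mul_sub_log {y p : ℝ} (hy : 0 ≤ y) (hp : 0 < p) :
    y - p ≤ y * (log y - log p) := by
  rcases hy.eq_or_lt with rfl | hy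
  · simpa using hp.le
  have hlog := one_sub_inv_le_log_of_pos (div_pos hy hp)
  rw [log_div hy.ne' hp.ne', inv_div] at hlog
  calc y - p = y * (1 - p / y) := by field_simp
    _ ≤ y * (log y - log p) := mul_le_mul_of_nonneg_left hlog hy.le

lemma log_sigmoid (x : ℝ) : log (sigmoid x) = x - log (1 + exp x) := by
  have h : 1 + exp x = exp x * (1 + exp (-x)) := by
    rw [mul_add, ← exp_add]
    simp [add_comm]
  rw [sigmoid_def, log_inv, h, log_mul (exp_ne_zero x) (by positivity), log_exp]
  ring

lemma log_sigmoid_neg (x : ℝ) : log (sigmoid (-x)) = -log (1 + exp x) := by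
  rw [sigmoid_def, neg_neg, log_inv]

lemma sub_log_one_add_exp_le (a : ℝ) {y : ℝ} (hy₀ : 0 ≤ y) (hy₁ : y ≤ 1) :
    a - log (1 + exp a) ≤ a * y - binEntropy y := by
  -- Gibbs' inequality between the Bernoulli laws of parameters `y` and `σ(-a)`.
  have h₀ := sub_le_mul_sub_log hy₀ (sigmoid_pos (-a))
  have h₁ := sub_le_mul_sub_log (sub_nonneg.2 hy₁) (sigmoid_pos a)
  rw [log_sigmoid_neg] at h₀
  rw [log_sigmoid] at h₁
  simp only [binEntropy, log_inv]
  linarith [sigmoid_neg a]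

lemma mul_sigmoid_neg_sub_binEntropy (a : ℝ) :
    a * sigmoid (-a) - binEntropy (sigmoid (-a)) = a - log (1 + exp a) := by
  have h : 1 - sigmoid (-a) = sigmoid a := by rw [sigmoid_neg]; ring
  rw [binEntropy, h, log_inv, log_inv, log_sigmoid_neg, log_sigmoid]
  linear_combination (a - log (1 + exp a)) * sigmoid_neg a

lemma hasDerivAt_log_one_add_exp (x : ℝ) :
    HasDerivAt (fun x => log (1 + exp x)) (sigmoid x) x := by
  convert ((hasDerivAt_exp x).const_add 1).log (by positivity) using 1
  rw [sigmoid_def, exp_neg]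
  field_simp
  ring

lemma hasFDerivAt_dotProduct {𝕜 ι : Type*} [NontriviallyNormedField 𝕜] [CompleteSpace 𝕜]
    [Fintype ι] (w x : ι → 𝕜) :
    HasFDerivAt (w ⬝ᵥ ·) (LinearMap.toContinuousLinearMap (dotProductBilin 𝕜 𝕜 w)) x :=
  (LinearMap.toContinuousLinearMap (dotProductBilin 𝕜 𝕜 w)).hasFDerivAt

lemma HasFDerivAt.apply_sub_nonpos_of_isMaxOn {E : Type*} [NormedAddCommGroup E]
    [NormedSpace ℝ E] {f : E → ℝ} {f' : E →L[ℝ] ℝ} {s : Set E} {x z : E} (hs : Convex ℝ s)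
    (hx : x ∈ s) (hz : z ∈ s) (hmax : IsMaxOn f s x) (hf : HasFDerivAt f f' x) :
    f' (z - x) ≤ 0 :=
  hmax.localize.hasFDerivWithinAt_nonpos hf.hasFDerivWithinAt
    (sub_mem_posTangentConeAt_of_segment_subset (hs.segment_subset hx hz))

lemma dotProduct_le_sup' {R ι : Type*} [CommSemiring R] [LinearOrder R] [IsOrderedRing R]
    [Fintype ι] [Nonempty ι] {lam : ι → R} (hlam : lam ∈ stdSimplex R ι) (v : ι → R) :
    lam ⬝ᵥ v ≤ univ.sup' univ_nonempty v :=
  calc lam ⬝ᵥ v ≤ ∑ i, lam i * univ.sup' univ_nonempty v :=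
        sum_le_sum fun i _ => mul_le_mul_of_nonneg_left (le_sup' v (mem_univ i)) (hlam.1 i)
    _ = univ.sup' univ_nonempty v := by rw [← sum_mul, hlam.2, one_mul]

namespace BundleEntropy

variable {ι κ : Type*} [Fintype ι] (G : Matrix ι κ ℝ)

noncomputable def primalOfDual (lam : ι → ℝ) : κ → ℝ :=
  fun j => sigmoid (-(Gᵀ *ᵥ lam) j)

lemma primalOfDual_mem_Icc (lam : ι → ℝ) : primalOfDual G lam ∈ Set.Icc 0 1 :=
  ⟨fun _ => sigmoid_nonneg _, fun _ => sigmoid_le_one _⟩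

variable [Fintype κ] (h : ι → ℝ)

noncomputable def primalFun [Nonempty ι] (y : κ → ℝ) : ℝ :=
  univ.sup' univ_nonempty (G *ᵥ y + h) - ∑ j, binEntropy (y j)

noncomputable def lagrangian (lam : ι → ℝ) (y : κ → ℝ) : ℝ :=
  lam ⬝ᵥ (G *ᵥ y + h) - ∑ j, binEntropy (y j)

noncomputable def dualFun (lam : ι → ℝ) : ℝ :=
  (G *ᵥ 1 + h) ⬝ᵥ lam - ∑ j, log (1 + exp ((Gᵀ *ᵥ lam) j))

lemma lagrangian_eq (lam : ι → ℝ) (y : κ → ℝ) :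
    lagrangian G h lam y = h ⬝ᵥ lam + ∑ j, ((Gᵀ *ᵥ lam) j * y j - binEntropy (y j)) := by
  rw [lagrangian, dotProduct_add, dotProduct_mulVec, ← mulVec_transpose, sum_sub_distrib,
    dotProduct_comm lam h, dotProduct]
  ring

lemma dualFun_eq (lam : ι → ℝ) :
    dualFun G h lam = h ⬝ᵥ lam + ∑ j, ((Gᵀ *ᵥ lam) j - log (1 + exp ((Gᵀ *ᵥ lam) j))) := by
  rw [dualFun, add_dotProduct, dotProduct_comm, dotProduct_mulVec, ← mulVec_transpose,
    sum_sub_distrib, dotProduct_one]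
  ring

lemma dualFun_le_lagrangian (lam : ι → ℝ) {y : κ → ℝ} (hy : y ∈ Set.Icc 0 1) :
    dualFun G h lam ≤ lagrangian G h lam y := by
  rw [dualFun_eq, lagrangian_eq]
  exact add_le_add le_rfl (sum_le_sum fun j _ => sub_log_one_add_exp_le _ (hy.1 j) (hy.2 j))

lemma lagrangian_primalOfDual (lam : ι → ℝ) :
    lagrangian G h lam (primalOfDual G lam) = dualFun G h lam := by
  rw [dualFun_eq, lagrangian_eq]
  simp only [primalOfDual, mul_sigmoid_neg_sub_binEntropy]

lemma lagrangian_le_primalFun [Nonempty ι] {lam : ι → ℝ} (hlam : lam ∈ stdSimplex ℝ ι)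
    (y : κ → ℝ) : lagrangian G h lam y ≤ primalFun G h y :=
  sub_le_sub_right (dotProduct_le_sup' hlam _) _

lemma dualFun_le_primalFun [Nonempty ι] {lam : ι → ℝ} (hlam : lam ∈ stdSimplex ℝ ι)
    {y : κ → ℝ} (hy : y ∈ Set.Icc 0 1) : dualFun G h lam ≤ primalFun G h y :=
  (dualFun_le_lagrangian G h lam hy).trans (lagrangian_le_primalFun G h hlam y)

lemma hasFDerivAt_dualFun (lam : ι → ℝ) :
    HasFDerivAt (dualFun G h)
      (LinearMap.toContinuousLinearMap (dotProductBilin ℝ ℝ (G *ᵥ primalOfDual G lam + h)))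
      lam := by
  have hlog j := (hasDerivAt_log_one_add_exp ((Gᵀ *ᵥ lam) j)).comp_hasFDerivAt lam
    (hasFDerivAt_dotProduct (Gᵀ j) lam)
  refine ((hasFDerivAt_dotProduct (G *ᵥ 1 + h) lam).sub
    (HasFDerivAt.fun_sum fun j _ => hlog j)).congr_fderiv ?_
  ext v
  set s : κ → ℝ := fun j => sigmoid ((Gᵀ *ᵥ lam) j)
  have hy : primalOfDual G lam = 1 - s := funext fun j => sigmoid_neg _
  have hs : (G *ᵥ s) ⬝ᵥ v = ∑ j, s j * (Gᵀ j ⬝ᵥ v) := by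
    rw [dotProduct_comm, dotProduct_mulVec, ← mulVec_transpose, dotProduct_comm]
    rfl
  simp only [map_add, _root_.sub_apply, _root_.add_apply, LinearMap.coe_toContinuousLinearMap',
    dotProductBilin_apply_apply, _root_.sum_apply, _root_.smul_apply, smul_eq_mul]
  rw [hy, mulVec_sub, sub_dotProduct, hs]
  ring

lemma continuous_dualFun : Continuous (dualFun G h) :=
  continuous_iff_continuousAt.2 fun lam => (hasFDerivAt_dualFun G h lam).continuousAt

lemma exists_isMaxOn_dualFun [Nonempty ι] :
    ∃ lam ∈ stdSimplex ℝ ι, IsMaxOn (dualFun G h) (stdSimplex ℝ ι) lam :=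
  (isCompact_stdSimplex ℝ ι).exists_isMaxOn (Set.nonempty_coe_sort.1 inferInstance)
    (continuous_dualFun G h).continuousOn

lemma apply_le_dotProduct_of_isMaxOn {lam : ι → ℝ} (hlam : lam ∈ stdSimplex ℝ ι)
    (hmax : IsMaxOn (dualFun G h) (stdSimplex ℝ ι) lam) (i : ι) :
    (G *ᵥ primalOfDual G lam + h) i ≤ lam ⬝ᵥ (G *ᵥ primalOfDual G lam + h) := by
  classical
  have hi := (hasFDerivAt_dualFun G h lam).apply_sub_nonpos_of_isMaxOn (convex_stdSimplex ℝ ι)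
    hlam (single_mem_stdSimplex ℝ i) hmax
  rw [LinearMap.coe_toContinuousLinearMap', dotProductBilin_apply_apply, dotProduct_sub,
    dotProduct_single, mul_one, dotProduct_comm] at hi
  linarith

lemma primalFun_primalOfDual [Nonempty ι] {lam : ι → ℝ} (hlam : lam ∈ stdSimplex ℝ ι)
    (hmax : IsMaxOn (dualFun G h) (stdSimplex ℝ ι) lam) :
    primalFun G h (primalOfDual G lam) = dualFun G h lam := by
  rw [← lagrangian_primalOfDual G h lam, primalFun, lagrangian]
  congr 1
  exact le_antisymm (sup'_le _ _ fun i _ => apply_le_dotProduct_of_isMaxOn G h hlam hmax i)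
    (dotProduct_le_sup' hlam _)

lemma sup'_add_negEnt_eq_primalFun {k n : ℕ} [Nonempty (Fin k)]
    (H : (univ : Finset (Fin k)).Nonempty) (G : Matrix (Fin k) (Fin n) ℝ) (h : Fin k → ℝ)
    (y : Fin n → ℝ) :
    (univ.sup' H fun i => (G *ᵥ y) i + h i) + negEnt y = primalFun G h y := by
  rw [primalFun, negEnt_eq_neg_sum_binEntropy, ← sub_eq_add_neg]
  rfl

end BundleEntropy

open BundleEntropy

/-- Strong duality for the bundle entropy subproblem:
`min_{y ∈ [0,1]ⁿ} (maxᵢ (Gy + h)ᵢ - H(y)) = max_{λ ≥ 0, 1ᵀλ = 1} ((G1 + h)ᵀλ - ∑ⱼ log (1 +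
exp ((Gᵀλ)ⱼ)))`, and both the minimum and the maximum are attained.  (Recall
`-H(y) = negEnt y`.) -/
theorem bundle_entropy_strong_duality (k n : ℕ) (hk : 0 < k)
    (G : Matrix (Fin k) (Fin n) ℝ) (h : Fin k → ℝ) :
    ∃ ystar ∈ Set.Icc (0 : Fin n → ℝ) 1, ∃ lamstar : Fin k → ℝ,
      (∀ i, 0 ≤ lamstar i) ∧ (∑ i, lamstar i = 1) ∧
      (∀ y ∈ Set.Icc (0 : Fin n → ℝ) 1,
        (Finset.univ.sup' ⟨⟨0, hk⟩, Finset.mem_univ _⟩ fun i => G.mulVec ystar i + h i)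
            + negEnt ystar ≤
          (Finset.univ.sup' ⟨⟨0, hk⟩, Finset.mem_univ _⟩ fun i => G.mulVec y i + h i)
            + negEnt y) ∧
      (∀ lam : Fin k → ℝ, (∀ i, 0 ≤ lam i) → (∑ i, lam i = 1) →
        (∑ i, (G.mulVec (fun _ => 1) i + h i) * lam i)
            - ∑ j, Real.log (1 + Real.exp (G.transpose.mulVec lam j)) ≤
          (∑ i, (G.mulVec (fun _ => 1) i + h i) * lamstar i)
            - ∑ j, Real.log (1 + Real.exp (G.transpose.mulVec lamstar j))) ∧
      ((Finset.univ.sup' ⟨⟨0, hk⟩, Finset.mem_univ _⟩ fun i => G.mulVec ystar i + h i)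
          + negEnt ystar =
        (∑ i, (G.mulVec (fun _ => 1) i + h i) * lamstar i)
          - ∑ j, Real.log (1 + Real.exp (G.transpose.mulVec lamstar j))) := by
  have : Nonempty (Fin k) := ⟨⟨0, hk⟩⟩
  obtain ⟨lam, hlam, hmax⟩ := exists_isMaxOn_dualFun G h
  have hsaddle := primalFun_primalOfDual G h hlam hmax
  -- Stated with the statement's own nonemptiness proof term, which `rw` cannot match otherwise.
  have hprimal (y : Fin n → ℝ) : (Finset.univ.sup' ⟨⟨0, hk⟩, Finset.mem_univ _⟩
      fun i => G.mulVec y i + h i) + negEnt y = primalFun G h y :=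
    sup'_add_negEnt_eq_primalFun _ G h y
  simp only [hprimal]
  refine ⟨primalOfDual G lam, primalOfDual_mem_Icc G lam, lam, hlam.1, hlam.2,
    fun y hy => ?_, fun μ hμ₀ hμ₁ => ?_, hsaddle⟩
  · rw [hsaddle]
    exact dualFun_le_primalFun G h hlam hy
  · exact (dualFun_le_primalFun G h ⟨hμ₀, hμ₁⟩ (primalOfDual_mem_Icc G lam)).trans_eq hsaddle
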